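/- Let 0 < λ_1 ≤ λ_2 ≤ ... ≤ λ_{n+1} and let b_1,...,b_{n+1}, f be nonnegative reals with Σ_{A=1}^{n+1} b_A = m·f and b_A ≤ f for all A, where m ≤ n+1. Then Σ_{A=1}^{n+1} λ_A^{-1} b_A ≤ f · Σ_{A=1}^{m} λ_A^{-1}. -/
import Mathlib


/-- Pointwise algebraic inequality underlying the test-function argument:
if `0 < λ_1 ≤ ... ≤ λ_{n+1}`, `b_A, f ≥ 0`, `Σ_{A=1}^{n+1} b_A = m f`, `b_A ≤ f`, `m ≤ n+1`,
then `Σ_{A=1}^{n+1} λ_A⁻¹ b_A ≤ f · Σ_{A=1}^m λ_A⁻¹`. -/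
theorem tail_redistribution_inequality
    (n m : ℕ) (hm1 : 1 ≤ m) (hm : m ≤ n + 1)
    (lam : ℕ → ℝ) (hlam1 : 0 < lam 1)
    (hmono : ∀ i j, 1 ≤ i → i ≤ j → j ≤ n + 1 → lam i ≤ lam j)
    (b : ℕ → ℝ) (f : ℝ)
    (hb : ∀ A, 1 ≤ A → A ≤ n + 1 → 0 ≤ b A) (hf : 0 ≤ f)
    (hsum : ∑ A ∈ Finset.Icc 1 (n + 1), b A = m * f)
    (hle : ∀ A, 1 ≤ A → A ≤ n + 1 → b A ≤ f) :
    ∑ A ∈ Finset.Icc 1 (n + 1), (lam A)⁻¹ * b A ≤ f * ∑ A ∈ Finset.Icc 1 m, (lam A)⁻¹ := by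
  have hpos : ∀ A, 1 ≤ A → A ≤ n + 1 → 0 < lam A := fun A h1 h2 =>
    lt_of_lt_of_le hlam1 (hmono 1 A le_rfl h1 h2)
  have hunion : Finset.Icc 1 m ∪ Finset.Ioc m (n + 1) = Finset.Icc 1 (n + 1) := by
    ext x; simp [Finset.mem_Icc, Finset.mem_Ioc]; omega
  have hdisj : Disjoint (Finset.Icc 1 m) (Finset.Ioc m (n + 1)) := by
    simp [Finset.disjoint_left, Finset.mem_Icc, Finset.mem_Ioc]
    omega
  have hsplit : ∀ g : ℕ → ℝ, ∑ A ∈ Finset.Icc 1 (n + 1), g A =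
      ∑ A ∈ Finset.Icc 1 m, g A + ∑ A ∈ Finset.Ioc m (n + 1), g A := by
    intro g
    rw [← hunion, Finset.sum_union hdisj]
  rw [hsplit]
  -- bound the tail
  have htail : ∑ A ∈ Finset.Ioc m (n + 1), (lam A)⁻¹ * b A ≤
      (lam m)⁻¹ * ∑ A ∈ Finset.Ioc m (n + 1), b A := by
    rw [Finset.mul_sum]
    apply Finset.sum_le_sum
    intro A hA
    rw [Finset.mem_Ioc] at hA
    have h1A : (1 : ℕ) ≤ A := le_trans hm1 (le_of_lt hA.1)
    have hlm : lam m ≤ lam A := hmono m A hm1 (le_of_lt hA.1) hA.2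
    exact mul_le_mul_of_nonneg_right
      (inv_anti₀ (hpos m hm1 hm) hlm) (hb A h1A hA.2)
  have hbsum : ∑ A ∈ Finset.Ioc m (n + 1), b A =
      ∑ A ∈ Finset.Icc 1 m, (f - b A) := by
    have h1 : ∑ A ∈ Finset.Icc 1 m, b A + ∑ A ∈ Finset.Ioc m (n + 1), b A = m * f := by
      rw [← hsplit]; exact hsum
    have hcard : ∑ A ∈ Finset.Icc 1 m, f = m * f := by
      rw [Finset.sum_const, Nat.card_Icc]
      simp [nsmul_eq_mul]
    rw [Finset.sum_sub_distrib, hcard]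
    linarith
  rw [hbsum] at htail
  have hkey : ∑ A ∈ Finset.Icc 1 m, (lam A)⁻¹ * b A +
      (lam m)⁻¹ * ∑ A ∈ Finset.Icc 1 m, (f - b A) ≤
      f * ∑ A ∈ Finset.Icc 1 m, (lam A)⁻¹ := by
    rw [Finset.mul_sum, Finset.mul_sum, ← Finset.sum_add_distrib]
    apply Finset.sum_le_sum
    intro A hA
    rw [Finset.mem_Icc] at hA
    have hAn : A ≤ n + 1 := le_trans hA.2 hm
    have hlA : 0 < lam A := hpos A hA.1 hAn
    have hlm : lam A ≤ lam m := hmono A m hA.1 hA.2 hm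
    have hinv : (lam m)⁻¹ ≤ (lam A)⁻¹ := inv_anti₀ hlA hlm
    have hfb : 0 ≤ f - b A := sub_nonneg.mpr (hle A hA.1 hAn)
    nlinarith [mul_le_mul_of_nonneg_right hinv hfb]
  linarith
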